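/- arXiv:0903.5458 — 3 statements merged into one kernel-verified Lean document; each statement's English description precedes it below -/
import Mathlib

section
/- Let (P_l)_{l∈ℕ} be a family of pairwise-orthogonal orthogonal projections on a complex Hilbert space H, let (h_l) be real numbers, and set H_L := Σ_{l=0}^L h_l P_l. Let n ≥ 1 be an integer, let (s_l) be strictly positive real numbers with Σ_l s_l^{-2n} < ∞, and let R be a bounded operator on H satisfying R P_l = s_l^{-n} P_l for every l. Then for every t ∈ ℝ, lim_{L,M→∞} ‖R (exp(i t H_L) − exp(i t H_M))‖ = 0; that is, for every ε > 0 there exists N such that for all L, M ≥ N, ‖R (exp(i t H_L) − exp(i t H_M))‖ < ε. -/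
/-!
Since the `P l` are pairwise orthogonal idempotents,
`exp (i t H_L) = 1 + ∑_{l ≤ L} (e^{i t h_l} - 1) P_l`, so `R exp (i t H_L) = R + ∑_{l ≤ L} a_l P_l`
with `|a_l|² ≤ 4 s_l^{-2n}`. In a C⋆-algebra the C⋆-identity gives
`‖∑ a_l P_l‖² = ‖∑ |a_l|² P_l‖ ≤ ∑ |a_l|²` over any finite set, so the series `∑ a_l P_l` satisfies
the Cauchy criterion in operator norm, and its partial sums form a Cauchy sequence.
-/

open NormedSpace

section ExpIdempotent

variable {A : Type*} [NormedRing A] [NormedAlgebra ℂ A]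

theorem IsIdempotentElem.exp_smul {p : A} (hp : IsIdempotentElem p) (c : ℂ) :
    exp (c • p) = 1 + (exp c - 1) • p := by
  have hterm : ∀ k : ℕ, ((k.factorial : ℂ)⁻¹) • (c • p) ^ k
      = ((k.factorial : ℂ)⁻¹ • c ^ k) • p + if k = 0 then 1 - p else 0 := by
    rintro (_ | k)
    · simp
    · simp [smul_pow, hp.pow_succ_eq, smul_smul]
  have hsummable : Summable fun k : ℕ => ((k.factorial : ℂ)⁻¹ • c ^ k) :=
    expSeries_summable' (𝕂 := ℂ) c
  rw [exp_eq_tsum ℂ, exp_eq_tsum ℂ]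
  simp only [hterm]
  rw [(hsummable.smul_const p).tsum_add (summable_of_ne_finset_zero (s := {0}) (by simp_all)),
    hsummable.tsum_smul_const, tsum_ite_eq, sub_smul, one_smul]
  abel

theorem exp_sum_smul_of_orthogonal [CompleteSpace A] {ι : Type*} [DecidableEq ι] {p : ι → A}
    (hp : ∀ i, IsIdempotentElem (p i)) (horth : Pairwise fun i j => p i * p j = 0)
    (z : ι → ℂ) (s : Finset ι) :
    exp (∑ i ∈ s, z i • p i) = 1 + ∑ i ∈ s, (exp (z i) - 1) • p i := by
  induction s using Finset.induction_on with
  | empty => simp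
  | insert a s ha ih =>
    have hzero : ∀ i ∈ s, p a * p i = 0 ∧ p i * p a = 0 := fun i hi =>
      have hne : a ≠ i := fun h => ha (h ▸ hi)
      ⟨horth hne, horth hne.symm⟩
    have hcomm : Commute (z a • p a) (∑ i ∈ s, z i • p i) :=
      Commute.sum_right _ _ _ fun i hi => ((Commute.smul_left
        (by simp [Commute, SemiconjBy, (hzero i hi).1, (hzero i hi).2]) _).smul_right _)
    have hcross : p a * ∑ i ∈ s, (exp (z i) - 1) • p i = 0 := by
      rw [Finset.mul_sum]
      exact Finset.sum_eq_zero fun i hi => by rw [mul_smul_comm, (hzero i hi).1, smul_zero]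
    have hball : ∀ x : A, x ∈ Metric.eball (0 : A) (expSeries ℂ A).radius := fun x => by
      rw [expSeries_radius_eq_top]; exact edist_lt_top _ _
    rw [Finset.sum_insert ha, Finset.sum_insert ha,
      exp_add_of_commute_of_mem_ball hcomm (hball _) (hball _), (hp a).exp_smul, ih,
      add_mul, one_mul, mul_add, mul_one, smul_mul_assoc, hcross, smul_zero]
    abel

end ExpIdempotent

theorem norm_exp_ofReal_mul_I_sub_one_mul_sq_le (x r : ℝ) :
    ‖(exp ((x : ℂ) * Complex.I) - 1) * r‖ ^ 2 ≤ 4 * r ^ 2 := by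
  have hexp : ‖exp ((x : ℂ) * Complex.I) - 1‖ ≤ 2 :=
    calc _ ≤ ‖exp ((x : ℂ) * Complex.I)‖ + ‖(1 : ℂ)‖ := norm_sub_le _ _
      _ = 2 := by rw [← Complex.exp_eq_exp_ℂ, Complex.norm_exp_ofReal_mul_I]; norm_num
  rw [norm_mul, mul_pow, Complex.norm_real, Real.norm_eq_abs, sq_abs]
  calc _ ≤ 2 ^ 2 * r ^ 2 := by gcongr
    _ = 4 * r ^ 2 := by norm_num

section StarProjection

variable {A : Type*} [NormedRing A] [StarRing A] [CStarRing A] [NormedAlgebra ℂ A]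
  [StarModule ℂ A]

theorem norm_sum_smul_sq_le_of_orthogonal {ι : Type*} {p : ι → A}
    (hp : ∀ i, IsStarProjection (p i)) (horth : Pairwise fun i j => p i * p j = 0)
    (a : ι → ℂ) (s : Finset ι) :
    ‖∑ i ∈ s, a i • p i‖ ^ 2 ≤ ∑ i ∈ s, ‖a i‖ ^ 2 := by
  classical
  have hstar_mul : star (∑ i ∈ s, a i • p i) * ∑ i ∈ s, a i • p i
      = ∑ i ∈ s, (‖a i‖ ^ 2 : ℂ) • p i := by
    simp only [star_sum, star_smul, (hp _).isSelfAdjoint.star_eq, Finset.sum_mul_sum,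
      smul_mul_smul_comm]
    refine Finset.sum_congr rfl fun i hi => ?_
    rw [Finset.sum_eq_single_of_mem i hi fun j _ hji => by rw [horth hji.symm, smul_zero],
      (hp i).isIdempotentElem.eq, ← Complex.conj_mul']
    rfl
  calc ‖∑ i ∈ s, a i • p i‖ ^ 2 = ‖∑ i ∈ s, (‖a i‖ ^ 2 : ℂ) • p i‖ := by
        rw [← hstar_mul, CStarRing.norm_star_mul_self, sq]
    _ ≤ ∑ i ∈ s, ‖(‖a i‖ ^ 2 : ℂ) • p i‖ := norm_sum_le _ _
    _ ≤ ∑ i ∈ s, ‖a i‖ ^ 2 := Finset.sum_le_sum fun i _ => by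
        rw [norm_smul]
        simpa using mul_le_of_le_one_right (sq_nonneg ‖a i‖) ((hp i).norm_le)

theorem summable_smul_of_orthogonal [CompleteSpace A] {ι : Type*} {p : ι → A}
    (hp : ∀ i, IsStarProjection (p i)) (horth : Pairwise fun i j => p i * p j = 0)
    {a : ι → ℂ} (ha : Summable fun i => ‖a i‖ ^ 2) :
    Summable fun i => a i • p i := by
  refine summable_iff_vanishing_norm.mpr fun ε hε => ?_
  obtain ⟨s, hs⟩ := summable_iff_vanishing_norm.mp ha (ε ^ 2) (by positivity)
  refine ⟨s, fun t ht => ?_⟩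
  have htail := hs t ht
  rw [Real.norm_of_nonneg (Finset.sum_nonneg fun i _ => by positivity)] at htail
  exact (pow_lt_pow_iff_left₀ (norm_nonneg _) hε.le two_ne_zero).mp
    ((norm_sum_smul_sq_le_of_orthogonal hp horth a t).trans_lt htail)

end StarProjection

theorem stmt_4_general {H : Type*} [NormedAddCommGroup H] [InnerProductSpace ℂ H] [CompleteSpace H]
    (P : ℕ → H →L[ℂ] H)
    (hP_sa : ∀ l, IsSelfAdjoint (P l))
    (hP_idem : ∀ l, P l * P l = P l)
    (hP_orth : ∀ l k, l ≠ k → P l * P k = 0)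
    (h : ℕ → ℝ)
    (HL : ℕ → H →L[ℂ] H)
    (hHL : ∀ L, HL L = ∑ l ∈ Finset.range (L + 1), (h l : ℂ) • P l)
    (n : ℕ)
    (s : ℕ → ℝ)
    (hsum : Summable (fun l => (s l ^ (2 * n))⁻¹))
    (R : H →L[ℂ] H)
    (hR : ∀ l, R * P l = (((s l ^ n)⁻¹ : ℝ) : ℂ) • P l)
    (t : ℝ) :
    ∀ ε > 0, ∃ N : ℕ, ∀ L ≥ N, ∀ M ≥ N,
      ‖R * (exp ((Complex.I * t) • HL L) - exp ((Complex.I * t) • HL M))‖ < ε := by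
  set a : ℕ → ℂ := fun l =>
    (exp (((t * h l : ℝ) : ℂ) * Complex.I) - 1) * (((s l ^ n)⁻¹ : ℝ) : ℂ)
  have horth : Pairwise fun l k => P l * P k = 0 := fun l k => hP_orth l k
  have hpartial : ∀ L, R * exp ((Complex.I * t) • HL L)
      = R + ∑ l ∈ Finset.range (L + 1), a l • P l := by
    intro L
    have hz : ∀ l, (Complex.I * t) • ((h l : ℂ) • P l)
        = (((t * h l : ℝ) : ℂ) * Complex.I) • P l := fun l => by rw [smul_smul]; push_cast; ring_nf
    rw [hHL, Finset.smul_sum, Finset.sum_congr rfl fun l _ => hz l,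
      exp_sum_smul_of_orthogonal hP_idem horth, mul_add, mul_one, Finset.mul_sum]
    refine congrArg _ (Finset.sum_congr rfl fun l _ => ?_)
    rw [mul_smul_comm, hR, smul_smul]
  have hcoeff : ∀ l, ‖a l‖ ^ 2 ≤ 4 * (s l ^ (2 * n))⁻¹ := fun l => by
    simpa only [a, inv_pow, ← pow_mul, mul_comm n 2]
      using norm_exp_ofReal_mul_I_sub_one_mul_sq_le (t * h l) (s l ^ n)⁻¹
  have hsummable : Summable fun l => a l • P l :=
    summable_smul_of_orthogonal (fun l => ⟨hP_idem l, hP_sa l⟩) horth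
      (.of_nonneg_of_le (fun l => sq_nonneg _) hcoeff (hsum.mul_left 4))
  have hcauchy : CauchySeq fun L => R * exp ((Complex.I * t) • HL L) := by
    simp only [hpartial]
    exact ((hsummable.hasSum.tendsto_sum_nat.comp (Filter.tendsto_add_atTop_nat 1)).const_add
      R).cauchySeq
  intro ε hε
  obtain ⟨N, hN⟩ := Metric.cauchySeq_iff.mp hcauchy ε hε
  exact ⟨N, fun L hL M hM => by simpa only [dist_eq_norm, mul_sub] using hN L hL M hM⟩

/-- (Proposition 1, part 1.) If `(s_l^{-n}) ∈ ℓ²(ℕ)` and `R`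
realizes `S^{-n}`, then `‖R (exp(i t H_L) − exp(i t H_M))‖ → 0` as `L, M → ∞`. -/
theorem stmt_4 {H : Type*} [NormedAddCommGroup H] [InnerProductSpace ℂ H] [CompleteSpace H]
    (P : ℕ → H →L[ℂ] H)
    (hP_sa : ∀ l, IsSelfAdjoint (P l))
    (hP_idem : ∀ l, P l * P l = P l)
    (hP_orth : ∀ l k, l ≠ k → P l * P k = 0)
    (h : ℕ → ℝ)
    (HL : ℕ → H →L[ℂ] H)
    (hHL : ∀ L, HL L = ∑ l ∈ Finset.range (L + 1), (h l : ℂ) • P l)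
    (n : ℕ) (hn : 1 ≤ n)
    (s : ℕ → ℝ) (hs : ∀ l, 0 < s l)
    (hsum : Summable (fun l => (s l ^ (2 * n))⁻¹))
    (R : H →L[ℂ] H)
    (hR : ∀ l, R * P l = (((s l ^ n)⁻¹ : ℝ) : ℂ) • P l)
    (t : ℝ) :
    ∀ ε > 0, ∃ N : ℕ, ∀ L ≥ N, ∀ M ≥ N,
      ‖R * (exp ((Complex.I * t) • HL L) - exp ((Complex.I * t) • HL M))‖ < ε :=
  stmt_4_general P hP_sa hP_idem hP_orth h HL hHL n s hsum R hR t
end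

section
/- Let (P_l)_{l∈ℕ} be a family of pairwise-orthogonal orthogonal projections on a complex Hilbert space H which is complete in the sense that for every x ∈ H the series Σ_l P_l x converges to x. Let (s_l) be strictly positive real numbers with Σ_l s_l^{-2} < ∞, and let R be a bounded operator on H with R P_l = s_l^{-1} P_l for every l. Set Q_M := Σ_{l=0}^M P_l. Then for every M, ‖R (1 − Q_M)‖ ≤ √(Σ_{l=M+1}^{∞} s_l^{-2}); in particular ‖R(1 − Q_M)‖ → 0 as M → ∞. -/
/-!
Write `x = Σ_l P_l x`. Then `R (1 - Q_M) x = Σ_{l > M} s_l⁻¹ P_l x` is a sum of pairwise orthogonal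
vectors, so by Pythagoras and `‖P_l x‖ ≤ ‖x‖` its squared norm is at most
`(Σ_{l > M} s_l⁻²) ‖x‖²`. The tails of the convergent series `Σ s_l⁻²` tend to `0`.
-/

open Filter
open scoped InnerProductSpace

section Pythagoras

variable {𝕜 E ι : Type*} [RCLike 𝕜] [NormedAddCommGroup E] [InnerProductSpace 𝕜 E]

theorem norm_sum_sq_eq_of_pairwise_inner_eq_zero {f : ι → E}
    (hf : Pairwise fun i j => ⟪f i, f j⟫_𝕜 = 0) (t : Finset ι) :
    ‖∑ i ∈ t, f i‖ ^ 2 = ∑ i ∈ t, ‖f i‖ ^ 2 := by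
  classical
  induction t using Finset.induction_on with
  | empty => simp
  | insert a t ha ih =>
    have hperp : ⟪f a, ∑ i ∈ t, f i⟫_𝕜 = 0 := by
      rw [inner_sum]
      exact Finset.sum_eq_zero fun i hi => hf (ne_of_mem_of_not_mem hi ha).symm
    rw [Finset.sum_insert ha, Finset.sum_insert ha, ← ih, sq, sq, sq,
      norm_add_sq_eq_norm_sq_add_norm_sq_of_inner_eq_zero _ _ hperp]

theorem norm_sq_le_of_hasSum_of_pairwise_inner_eq_zero {f : ι → E} {y : E} (hy : HasSum f y)
    (hf : Pairwise fun i j => ⟪f i, f j⟫_𝕜 = 0) {B : ℝ}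
    (hB : ∀ t : Finset ι, ∑ i ∈ t, ‖f i‖ ^ 2 ≤ B) : ‖y‖ ^ 2 ≤ B :=
  le_of_tendsto ((continuous_norm.pow 2).tendsto y |>.comp hy) <| Eventually.of_forall fun t => by
    simpa [norm_sum_sq_eq_of_pairwise_inner_eq_zero hf] using hB t

end Pythagoras

section Projections

variable {𝕜 E ι : Type*} [RCLike 𝕜] [NormedAddCommGroup E] [InnerProductSpace 𝕜 E]
  [CompleteSpace E]

theorem IsStarProjection.norm_apply_le {P : E →L[𝕜] E} (hP : IsStarProjection P) (x : E) :
    ‖P x‖ ≤ ‖x‖ :=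
  (P.le_opNorm x).trans (mul_le_of_le_one_left (norm_nonneg x) (IsStarProjection.norm_le P hP))

theorem inner_apply_eq_zero_of_mul_eq_zero {P T : E →L[𝕜] E} (hP : IsSelfAdjoint P)
    (hPT : P * T = 0) (x y : E) : ⟪P x, T y⟫_𝕜 = 0 := by
  have hPTy : P (T y) = 0 := by simpa using congr($hPT y)
  simpa [hPTy] using hP.isSymmetric x (T y)

theorem norm_apply_le_of_hasSum_of_mul_eq_smul {P : ι → E →L[𝕜] E}
    (hP : ∀ i, IsStarProjection (P i)) (horth : Pairwise fun i j => P i * P j = 0)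
    {R : E →L[𝕜] E} {c : ι → 𝕜} (hR : ∀ i, R * P i = c i • P i)
    (hc : Summable fun i => ‖c i‖ ^ 2) {x y : E} (hy : HasSum (fun i => P i x) y) :
    ‖R y‖ ≤ √(∑' i, ‖c i‖ ^ 2) * ‖x‖ := by
  have hRP : ∀ i, R (P i x) = c i • P i x := fun i => by simpa using congr($(hR i) x)
  have hRy : HasSum (fun i => c i • P i x) (R y) := by simpa only [hRP] using hy.mapL R
  have hperp : Pairwise fun i j => ⟪c i • P i x, c j • P j x⟫_𝕜 = 0 := fun i j hij => by
    dsimp only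
    rw [inner_smul_left, inner_smul_right,
      inner_apply_eq_zero_of_mul_eq_zero (hP i).isSelfAdjoint (horth hij), mul_zero, mul_zero]
  rw [← pow_le_pow_iff_left₀ (norm_nonneg _) (by positivity) two_ne_zero, mul_pow,
    Real.sq_sqrt (tsum_nonneg fun _ => sq_nonneg _)]
  refine norm_sq_le_of_hasSum_of_pairwise_inner_eq_zero hRy hperp fun t => ?_
  calc ∑ i ∈ t, ‖c i • P i x‖ ^ 2 ≤ ∑ i ∈ t, ‖c i‖ ^ 2 * ‖x‖ ^ 2 :=
        Finset.sum_le_sum fun i _ => by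
          rw [norm_smul, mul_pow]
          gcongr
          exact (hP i).norm_apply_le x
    _ = (∑ i ∈ t, ‖c i‖ ^ 2) * ‖x‖ ^ 2 := (Finset.sum_mul ..).symm
    _ ≤ (∑' i, ‖c i‖ ^ 2) * ‖x‖ ^ 2 := by
        gcongr
        exact hc.sum_le_tsum t fun i _ => sq_nonneg _

end Projections

theorem stmt_6_general {H : Type*} [NormedAddCommGroup H] [InnerProductSpace ℂ H] [CompleteSpace H]
    (P : ℕ → H →L[ℂ] H)
    (hP_sa : ∀ l, IsSelfAdjoint (P l))
    (hP_idem : ∀ l, P l * P l = P l)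
    (hP_orth : ∀ l k, l ≠ k → P l * P k = 0)
    (hP_complete : ∀ x : H, HasSum (fun l => P l x) x)
    (s : ℕ → ℝ)
    (hsum : Summable (fun l => ((s l)⁻¹) ^ 2))
    (R : H →L[ℂ] H)
    (hR : ∀ l, R * P l = (((s l)⁻¹ : ℝ) : ℂ) • P l)
    (Q : ℕ → H →L[ℂ] H)
    (hQ : ∀ M, Q M = ∑ l ∈ Finset.range (M + 1), P l) :
    (∀ M, ‖R * (1 - Q M)‖ ≤ Real.sqrt (∑' j : ℕ, ((s (M + 1 + j))⁻¹) ^ 2)) ∧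
    Tendsto (fun M => ‖R * (1 - Q M)‖) atTop (nhds 0) := by
  have hnorm : ∀ l, ‖(((s l)⁻¹ : ℝ) : ℂ)‖ ^ 2 = ((s l)⁻¹) ^ 2 := fun l => by
    rw [Complex.norm_real, Real.norm_eq_abs, sq_abs]
  have hbound : ∀ M, ‖R * (1 - Q M)‖ ≤ √(∑' j : ℕ, ((s (M + 1 + j))⁻¹) ^ 2) := fun M => by
    have horth : Pairwise fun j k => P (M + 1 + j) * P (M + 1 + k) = 0 :=
      fun j k hjk => hP_orth _ _ ((add_right_injective (M + 1)).ne hjk)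
    have htsum : Summable fun j => ‖(((s (M + 1 + j))⁻¹ : ℝ) : ℂ)‖ ^ 2 := by
      simpa only [hnorm, add_comm (M + 1)] using (summable_nat_add_iff (M + 1)).mpr hsum
    refine ContinuousLinearMap.opNorm_le_bound _ (Real.sqrt_nonneg _) fun x => ?_
    have htail : HasSum (fun j => P (M + 1 + j) x) ((1 - Q M) x) := by
      simpa [add_comm _ (M + 1), hQ] using (hasSum_nat_add_iff' (M + 1)).mpr (hP_complete x)
    simpa only [hnorm, mul_apply_eq_comp] using norm_apply_le_of_hasSum_of_mul_eq_smul
      (fun j => ⟨hP_idem (M + 1 + j), hP_sa (M + 1 + j)⟩) horth (fun j => hR (M + 1 + j))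
      htsum htail
  refine ⟨hbound, squeeze_zero (fun _ => norm_nonneg _) hbound ?_⟩
  have htails := (tendsto_sum_nat_add fun l => ((s l)⁻¹) ^ 2).comp (tendsto_add_atTop_nat 1)
  simpa only [Function.comp_def, Real.sqrt_zero, add_comm] using
    (Real.continuous_sqrt.tendsto 0).comp htails

/-- For a complete pairwise-orthogonal family `(P_l)`, with `R`
realizing `S^{-1}` (`R P_l = s_l^{-1} P_l`) and `(s_l^{-1}) ∈ ℓ²(ℕ)`, we have
`‖R (1 − Q_M)‖ ≤ √(Σ_{l=M+1}^∞ s_l^{-2})`, and hence `‖R (1 − Q_M)‖ → 0`. -/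
theorem stmt_6 {H : Type*} [NormedAddCommGroup H] [InnerProductSpace ℂ H] [CompleteSpace H]
    (P : ℕ → H →L[ℂ] H)
    (hP_sa : ∀ l, IsSelfAdjoint (P l))
    (hP_idem : ∀ l, P l * P l = P l)
    (hP_orth : ∀ l k, l ≠ k → P l * P k = 0)
    (hP_complete : ∀ x : H, HasSum (fun l => P l x) x)
    (s : ℕ → ℝ) (hs : ∀ l, 0 < s l)
    (hsum : Summable (fun l => ((s l)⁻¹) ^ 2))
    (R : H →L[ℂ] H)
    (hR : ∀ l, R * P l = (((s l)⁻¹ : ℝ) : ℂ) • P l)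
    (Q : ℕ → H →L[ℂ] H)
    (hQ : ∀ M, Q M = ∑ l ∈ Finset.range (M + 1), P l) :
    (∀ M, ‖R * (1 - Q M)‖ ≤ Real.sqrt (∑' j : ℕ, ((s (M + 1 + j))⁻¹) ^ 2)) ∧
    Tendsto (fun M => ‖R * (1 - Q M)‖) atTop (nhds 0) :=
  stmt_6_general P hP_sa hP_idem hP_orth hP_complete s hsum R hR Q hQ
end

section
/- Let (φ_l)_{l∈ℕ} be a Hilbert (orthonormal) basis of a complex Hilbert space H, let P_l be the orthogonal projection onto the span of φ_l (P_l x = ⟨φ_l, x⟩ φ_l), and let R be a bounded operator on H with R φ_l = (1 + l)^{-1} φ_l for every l. Let (h_l) be ANY sequence of real numbers and set H_L := Σ_{l=0}^L h_l P_l. Then for every t ∈ ℝ and all natural numbers M ≤ L, ‖R (exp(i t H_L) − exp(i t H_M))‖ ≤ 2 √(Σ_{k=M+1}^{L} (1+k)^{-2}); consequently, for every t ∈ ℝ, ‖R (exp(i t H_L) − exp(i t H_M))‖ → 0 as L, M → ∞. -/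
/-!
The rank-one projections `P l` are orthogonal idempotents, so the exponential series of
`i t H_L = Σ_{l ≤ L} i t h_l P_l` collapses to `1 + Σ_{l ≤ L} (e^{i t h_l} - 1) P_l`. Since `R P_l =
(1 + l)⁻¹ P_l`, the operator `R (exp (i t H_L) - exp (i t H_M))` is diagonal in the basis `φ` with
coefficients `(e^{i t h_l} - 1) (1 + l)⁻¹` for `M < l ≤ L`, of modulus at most `2 (1 + l)⁻¹` whatever
the `h_l` are; by Pythagoras its norm is at most `2 √(Σ_{M < l ≤ L} (1 + l)⁻²)`, and these are
tails of a convergent series.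
-/

open NormedSpace
open Finset

section OrthogonalIdempotents

variable {ι : Type*}

theorem sum_smul_pow_succ_of_mul_eq_ite [DecidableEq ι] {R A : Type*} [CommSemiring R]
    [Semiring A] [Algebra R A] {P : ι → A} (hP : ∀ l m, P l * P m = if l = m then P m else 0)
    (s : Finset ι) (c : ι → R) (n : ℕ) :
    (∑ l ∈ s, c l • P l) ^ (n + 1) = ∑ l ∈ s, c l ^ (n + 1) • P l := by
  induction n with
  | zero => simp
  | succ n ih =>
    rw [pow_succ, ih, sum_mul_sum]
    refine sum_congr rfl fun l hl => ?_
    simp_rw [smul_mul_smul_comm, hP, smul_ite, smul_zero]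
    rw [sum_ite_eq s l, if_pos hl, ← pow_succ]

variable {A : Type*} [NormedRing A] [NormedAlgebra ℂ A]

theorem exp_sum_smul_of_mul_eq_ite [DecidableEq ι] {P : ι → A}
    (hP : ∀ l m, P l * P m = if l = m then P m else 0)
    (s : Finset ι) (c : ι → ℂ) :
    exp (∑ l ∈ s, c l • P l) = 1 + ∑ l ∈ s, (Complex.exp (c l) - 1) • P l := by
  have hcoeff : ∀ l ∈ s, HasSum (fun n : ℕ => ((n + 1).factorial : ℂ)⁻¹ • c l ^ (n + 1) • P l)
      ((Complex.exp (c l) - 1) • P l) := fun l _ => by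
    have hexp : HasSum (fun n : ℕ => ((n + 1).factorial : ℂ)⁻¹ * c l ^ (n + 1))
        (Complex.exp (c l) - 1) := by
      simpa [Complex.exp_eq_exp_ℂ, div_eq_inv_mul] using
        (hasSum_nat_add_iff' 1).mpr (expSeries_div_hasSum_exp (c l))
    simpa only [smul_smul] using hexp.smul_const (P l)
  rw [exp_eq_tsum ℂ]
  refine ((hasSum_nat_add_iff' 1).mp ?_).tsum_eq
  simpa [sum_smul_pow_succ_of_mul_eq_ite hP, smul_sum] using hasSum_sum hcoeff

theorem exp_sum_range_sub_exp_sum_range {P : ℕ → A}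
    (hP : ∀ l m, P l * P m = if l = m then P m else 0) (c : ℕ → ℂ) {M L : ℕ} (hML : M ≤ L) :
    exp (∑ l ∈ range (L + 1), c l • P l) - exp (∑ l ∈ range (M + 1), c l • P l) =
      ∑ l ∈ Ioc M L, (Complex.exp (c l) - 1) • P l := by
  rw [exp_sum_smul_of_mul_eq_ite hP, exp_sum_smul_of_mul_eq_ite hP, add_sub_add_left_eq_sub,
    ← Ico_add_one_add_one_eq_Ioc, sum_Ico_eq_sub _ (by omega)]

end OrthogonalIdempotents

theorem Complex.norm_exp_I_mul_ofReal_sub_one_le_two (θ : ℝ) :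
    ‖Complex.exp (Complex.I * θ) - 1‖ ≤ 2 := by
  calc ‖Complex.exp (Complex.I * θ) - 1‖ ≤ ‖Complex.exp (Complex.I * θ)‖ + ‖(1 : ℂ)‖ :=
        norm_sub_le _ _
    _ = 2 := by rw [Complex.norm_exp_I_mul_ofReal, norm_one]; norm_num

theorem sqrt_sum_norm_sq_le_mul_sqrt_sum_sq {ι E : Type*} [SeminormedAddGroup E] {s : Finset ι}
    {a : ι → E} {b : ι → ℝ} {C : ℝ} (hC : 0 ≤ C) (hab : ∀ l ∈ s, ‖a l‖ ≤ C * b l) :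
    √(∑ l ∈ s, ‖a l‖ ^ 2) ≤ C * √(∑ l ∈ s, b l ^ 2) := by
  have hsq : ∑ l ∈ s, ‖a l‖ ^ 2 ≤ C ^ 2 * ∑ l ∈ s, b l ^ 2 := by
    rw [mul_sum]
    gcongr with l hl
    rw [← mul_pow]
    exact pow_le_pow_left₀ (norm_nonneg _) (hab l hl) 2
  calc √(∑ l ∈ s, ‖a l‖ ^ 2) ≤ √(C ^ 2 * ∑ l ∈ s, b l ^ 2) := Real.sqrt_le_sqrt hsq
    _ = C * √(∑ l ∈ s, b l ^ 2) := by rw [Real.sqrt_mul (by positivity), Real.sqrt_sq hC]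

section RankOneProjections

variable {𝕜 H ι : Type*} [RCLike 𝕜] [NormedAddCommGroup H] [InnerProductSpace 𝕜 H]
  {φ : ι → H} {P : ι → H →L[𝕜] H}

theorem mul_eq_ite_of_orthonormal [DecidableEq ι] (hφ : Orthonormal 𝕜 φ)
    (hP : ∀ l x, P l x = inner 𝕜 (φ l) x • φ l) (l m : ι) :
    P l * P m = if l = m then P m else 0 := by
  ext x
  rcases eq_or_ne l m with rfl | hlm
  · simp [hP, inner_smul_right, hφ.norm_eq_one]
  · simp [hP, inner_smul_right, hφ.inner_eq_zero hlm, hlm]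

theorem mul_eq_smul_of_apply_eq_smul (hP : ∀ l x, P l x = inner 𝕜 (φ l) x • φ l)
    {R : H →L[𝕜] H} {μ : ι → 𝕜} (hR : ∀ l, R (φ l) = μ l • φ l) (l : ι) :
    R * P l = μ l • P l := by
  ext x
  simp [hP, hR, smul_smul, mul_comm]

theorem norm_sum_smul_le_sqrt (hφ : Orthonormal 𝕜 φ) (hP : ∀ l x, P l x = inner 𝕜 (φ l) x • φ l)
    (s : Finset ι) (a : ι → 𝕜) :
    ‖∑ l ∈ s, a l • P l‖ ≤ √(∑ l ∈ s, ‖a l‖ ^ 2) := by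
  refine ContinuousLinearMap.opNorm_le_bound _ (Real.sqrt_nonneg _) fun x => ?_
  have hpythagoras : ‖(∑ l ∈ s, a l • P l) x‖ ^ 2 = ∑ l ∈ s, ‖a l * inner 𝕜 (φ l) x‖ ^ 2 := by
    simpa [hP, smul_smul] using hφ.orthogonalFamily.norm_sum (fun l => a l * inner 𝕜 (φ l) x) s
  have hcoeff : ∑ l ∈ s, ‖a l * inner 𝕜 (φ l) x‖ ^ 2 ≤ (∑ l ∈ s, ‖a l‖ ^ 2) * ‖x‖ ^ 2 := by
    rw [sum_mul]
    gcongr with l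
    rw [norm_mul, mul_pow]
    gcongr
    simpa [hφ.norm_eq_one] using norm_inner_le_norm (𝕜 := 𝕜) (φ l) x
  rw [← Real.sqrt_sq (norm_nonneg x), ← Real.sqrt_mul (sum_nonneg fun _ _ => by positivity)]
  exact Real.le_sqrt_of_sq_le (hpythagoras ▸ hcoeff)

end RankOneProjections

theorem norm_mul_exp_sum_range_sub_exp_sum_range_le {H : Type*} [NormedAddCommGroup H]
    [InnerProductSpace ℂ H] {φ : ℕ → H} {P : ℕ → H →L[ℂ] H}
    (hφ : Orthonormal ℂ φ) (hP : ∀ l x, P l x = inner ℂ (φ l) x • φ l) {R : H →L[ℂ] H}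
    {w : ℕ → ℝ} (hR : ∀ l, R (φ l) = (w l : ℂ) • φ l) (θ : ℕ → ℝ) {M L : ℕ} (hML : M ≤ L) :
    ‖R * (exp (∑ l ∈ range (L + 1), (Complex.I * θ l) • P l) -
        exp (∑ l ∈ range (M + 1), (Complex.I * θ l) • P l))‖ ≤
      2 * √(∑ l ∈ Ioc M L, w l ^ 2) := by
  rw [exp_sum_range_sub_exp_sum_range (mul_eq_ite_of_orthonormal hφ hP) _ hML, mul_sum]
  simp_rw [mul_smul_comm, mul_eq_smul_of_apply_eq_smul hP hR, smul_smul, ← sq_abs (w _)]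
  refine (norm_sum_smul_le_sqrt hφ hP _ _).trans
    (sqrt_sum_norm_sq_le_mul_sqrt_sum_sq zero_le_two fun l _ => ?_)
  rw [norm_mul, Complex.norm_real, Real.norm_eq_abs]
  gcongr
  exact Complex.norm_exp_I_mul_ofReal_sub_one_le_two _

theorem summable_inv_one_add_natCast_sq : Summable fun k : ℕ => ((1 : ℝ) + k)⁻¹ ^ 2 := by
  refine ((summable_nat_add_iff 1).mpr (Real.summable_nat_pow_inv.mpr one_lt_two)).congr
    fun k => ?_
  push_cast
  rw [inv_pow, add_comm]

theorem exists_forall_sum_Ioc_lt {f : ℕ → ℝ} (hf : Summable f) (hf₀ : ∀ k, 0 ≤ f k) {δ : ℝ}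
    (hδ : 0 < δ) : ∃ N, ∀ M ≥ N, ∀ L, ∑ k ∈ Ioc M L, f k < δ := by
  obtain ⟨N, hN⟩ := Filter.eventually_atTop.mp
    ((tendsto_sum_nat_add f).eventually (gt_mem_nhds hδ))
  refine ⟨N, fun M hM L => lt_of_le_of_lt ?_ (hN (M + 1) (by omega))⟩
  rw [← Ico_add_one_add_one_eq_Ioc, sum_Ico_eq_sum_range]
  simp_rw [add_comm (M + 1)]
  exact ((summable_nat_add_iff (M + 1)).mpr hf).sum_le_tsum _ fun k _ => hf₀ _

theorem stmt_17_general {H : Type*} [NormedAddCommGroup H] [InnerProductSpace ℂ H]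
    (φ : ℕ → H) (hφ_on : Orthonormal ℂ φ)
    (P : ℕ → H →L[ℂ] H)
    (hP : ∀ l, ∀ x : H, P l x = (inner ℂ (φ l) x : ℂ) • φ l)
    (R : H →L[ℂ] H)
    (hR : ∀ l, R (φ l) = ((((1 : ℝ) + l)⁻¹ : ℝ) : ℂ) • φ l)
    (h : ℕ → ℝ)
    (HL : ℕ → H →L[ℂ] H)
    (hHL : ∀ L, HL L = ∑ l ∈ Finset.range (L + 1), (h l : ℂ) • P l)
    (t : ℝ) :
    (∀ M L : ℕ, M ≤ L →
      ‖R * (exp ((Complex.I * t) • HL L) - exp ((Complex.I * t) • HL M))‖ ≤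
        2 * Real.sqrt (∑ k ∈ Finset.Ioc M L, ((1 : ℝ) + k)⁻¹ ^ 2)) ∧
    (∀ ε > (0 : ℝ), ∃ N : ℕ, ∀ L ≥ N, ∀ M ≥ N,
      ‖R * (exp ((Complex.I * t) • HL L) - exp ((Complex.I * t) • HL M))‖ < ε) := by
  have hexponent : ∀ L, (Complex.I * t) • HL L =
      ∑ l ∈ range (L + 1), (Complex.I * (t * h l : ℝ)) • P l := fun L => by
    simp only [hHL, smul_sum, smul_smul, Complex.ofReal_mul, mul_assoc]
  have hbound : ∀ M L : ℕ, M ≤ L →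
      ‖R * (exp ((Complex.I * t) • HL L) - exp ((Complex.I * t) • HL M))‖ ≤
        2 * Real.sqrt (∑ k ∈ Finset.Ioc M L, ((1 : ℝ) + k)⁻¹ ^ 2) := fun M L hML => by
    simpa only [hexponent] using
      norm_mul_exp_sum_range_sub_exp_sum_range_le hφ_on hP hR (fun l => t * h l) hML
  refine ⟨hbound, fun ε hε => ?_⟩
  obtain ⟨N, hN⟩ := exists_forall_sum_Ioc_lt summable_inv_one_add_natCast_sq
    (fun _ => sq_nonneg _) (pow_pos (half_pos hε) 2)
  refine ⟨N, fun L hL M hM => ?_⟩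
  wlog hML : M ≤ L generalizing L M
  · rw [mul_sub, norm_sub_rev, ← mul_sub]
    exact this M hM L hL (le_of_not_ge hML)
  calc _ ≤ _ := hbound M L hML
    _ < 2 * (ε / 2) := by
      gcongr
      exact (Real.sqrt_lt' (half_pos hε)).mpr (hN M hM L)
    _ = ε := by ring

/-- (Example 1 of Section IV of the paper.) Let `(φ_l)` be an
orthonormal basis of `H`, `P_l` the rank-one projection onto `φ_l`, and `R` the
operator with `R φ_l = (1+l)^{-1} φ_l` (realizing `S^{-1} = (1+N)^{-1}`). Then
for ANY real sequence `(h_l)`, with `H_L = Σ_{l≤L} h_l P_l`, one has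
`‖R (exp(i t H_L) − exp(i t H_M))‖ ≤ 2 √(Σ_{k=M+1}^L (1+k)^{-2})` for `M ≤ L`,
and consequently `‖R (exp(i t H_L) − exp(i t H_M))‖ → 0` as `L, M → ∞`. -/
theorem stmt_17 {H : Type*} [NormedAddCommGroup H] [InnerProductSpace ℂ H] [CompleteSpace H]
    (φ : ℕ → H) (hφ_on : Orthonormal ℂ φ)
    (hφ_complete : ∀ x : H, HasSum (fun l => (inner ℂ (φ l) x : ℂ) • φ l) x)
    (P : ℕ → H →L[ℂ] H)
    (hP : ∀ l, ∀ x : H, P l x = (inner ℂ (φ l) x : ℂ) • φ l)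
    (R : H →L[ℂ] H)
    (hR : ∀ l, R (φ l) = ((((1 : ℝ) + l)⁻¹ : ℝ) : ℂ) • φ l)
    (h : ℕ → ℝ)
    (HL : ℕ → H →L[ℂ] H)
    (hHL : ∀ L, HL L = ∑ l ∈ Finset.range (L + 1), (h l : ℂ) • P l)
    (t : ℝ) :
    (∀ M L : ℕ, M ≤ L →
      ‖R * (exp ((Complex.I * t) • HL L) - exp ((Complex.I * t) • HL M))‖ ≤
        2 * Real.sqrt (∑ k ∈ Finset.Ioc M L, ((1 : ℝ) + k)⁻¹ ^ 2)) ∧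
    (∀ ε > (0 : ℝ), ∃ N : ℕ, ∀ L ≥ N, ∀ M ≥ N,
      ‖R * (exp ((Complex.I * t) • HL L) - exp ((Complex.I * t) • HL M))‖ < ε) :=
  stmt_17_general φ hφ_on P hP R hR h HL hHL t
end
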